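/- For integers 1 ≤ u < w, setting m = w - u and π_k = k(k+3)/((k+1)(k+2)), the derivative of the m-th iterate satisfies (d/dy) g_θ^{(m)}(y) evaluated at y = π_u equals f(w)/f(u), where f(k) = (64/3)·(3+2k)/(((3+2k)^2-1)^2). -/

import Mathlib

noncomputable def gθ : ℝ → ℝ :=
  fun y => 1 - 8 / ((Real.sqrt ((9 - y) / (1 - y)) + 2) ^ 2 - 1)

noncomputable def πGW (k : ℕ) : ℝ :=
  (k : ℝ) * ((k : ℝ) + 3) / (((k : ℝ) + 1) * ((k : ℝ) + 2))

noncomputable def fGW (k : ℕ) : ℝ :=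
  (64 / 3) * (3 + 2 * (k : ℝ)) / (((3 + 2 * (k : ℝ)) ^ 2 - 1) ^ 2)

lemma ratio_eq (k : ℕ) : (9 - πGW k) / (1 - πGW k) = (2 * (k : ℝ) + 3) ^ 2 := by
  have h1 : ((k : ℝ) + 1) ≠ 0 := by positivity
  have h2 : ((k : ℝ) + 2) ≠ 0 := by positivity
  have hsub : 1 - πGW k = 2 / (((k : ℝ) + 1) * ((k : ℝ) + 2)) := by
    unfold πGW; field_simp; ring
  have hsub9 : 9 - πGW k = (2 * (2 * (k : ℝ) + 3) ^ 2) / (((k : ℝ) + 1) * ((k : ℝ) + 2)) := by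
    unfold πGW; field_simp; ring
  rw [hsub, hsub9]
  field_simp

lemma sqrt_ratio (k : ℕ) :
    Real.sqrt ((9 - πGW k) / (1 - πGW k)) = 2 * (k : ℝ) + 3 := by
  rw [ratio_eq, Real.sqrt_sq (by positivity)]

lemma one_sub_pi (k : ℕ) : 1 - πGW k = 2 / (((k : ℝ) + 1) * ((k : ℝ) + 2)) := by
  have h1 : ((k : ℝ) + 1) ≠ 0 := by positivity
  have h2 : ((k : ℝ) + 2) ≠ 0 := by positivity
  unfold πGW; field_simp; ring

lemma one_sub_pi_ne (k : ℕ) : 1 - πGW k ≠ 0 := by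
  rw [one_sub_pi]; positivity

lemma den_ne (k : ℕ) :
    (Real.sqrt ((9 - πGW k) / (1 - πGW k)) + 2) ^ 2 - 1 ≠ 0 := by
  rw [sqrt_ratio]
  nlinarith [Nat.cast_nonneg (α := ℝ) k]

lemma fGW_pos (k : ℕ) : 0 < fGW k := by
  unfold fGW
  have h : (1:ℝ) < (3 + 2 * (k:ℝ)) ^ 2 := by nlinarith [Nat.cast_nonneg (α := ℝ) k]
  have h2 : (0:ℝ) < ((3 + 2 * (k : ℝ)) ^ 2 - 1) ^ 2 := pow_pos (by linarith) 2
  apply div_pos (by positivity) h2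

lemma gθ_pi (k : ℕ) : gθ (πGW k) = πGW (k + 1) := by
  unfold gθ
  rw [sqrt_ratio]
  unfold πGW
  have h1 : ((k : ℝ) + 2) ≠ 0 := by positivity
  have h2 : ((k : ℝ) + 3) ≠ 0 := by positivity
  have h3 : (2 * (k : ℝ) + 3 + 2) ^ 2 - 1 = 4 * (((k:ℝ) + 2) * ((k:ℝ) + 3)) := by ring
  rw [h3]
  push_cast
  field_simp
  ring

lemma gθ_deriv (k : ℕ) : HasDerivAt gθ (fGW (k + 1) / fGW k) (πGW k) := by
  have hy := one_sub_pi_ne k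
  have hA : (9 - πGW k) / (1 - πGW k) ≠ 0 := by
    rw [ratio_eq]; positivity
  have h1 : HasDerivAt (fun y : ℝ => (9 - y) / (1 - y))
      (((-1) * (1 - πGW k) - (9 - πGW k) * (-1)) / (1 - πGW k) ^ 2) (πGW k) :=
    ((hasDerivAt_id _).const_sub 9).div ((hasDerivAt_id _).const_sub 1) hy
  have hs := (Real.hasDerivAt_sqrt hA).comp (πGW k) h1
  have h3 := ((hs.add_const 2).pow 2).sub_const 1
  have h4 := (hasDerivAt_const (πGW k) (8:ℝ)).div h3 (den_ne k)
  have h5 := h4.const_sub 1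
  refine h5.congr_deriv ?_
  symm
  simp only [Function.comp, Pi.pow_apply]
  rw [sqrt_ratio]
  have hc0 : ((k : ℝ) + 1) ≠ 0 := by positivity
  have hc1 : ((k : ℝ) + 2) ≠ 0 := by positivity
  have hc2 : ((k : ℝ) + 3) ≠ 0 := by positivity
  have hc3 : (2 * (k : ℝ) + 3) ≠ 0 := by positivity
  have hd1 : (2 * (k : ℝ) + 3 + 2) ^ 2 - 1 = 4 * (((k:ℝ) + 2) * ((k:ℝ) + 3)) := by ring
  have hf1 : ((3 + 2 * ((k:ℝ) + 1)) ^ 2 - 1) = 4 * (((k:ℝ) + 2) * ((k:ℝ) + 3)) := by ring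
  have hf0 : ((3 + 2 * (k:ℝ)) ^ 2 - 1) = 4 * (((k:ℝ) + 1) * ((k:ℝ) + 2)) := by ring
  have h9 : 9 - πGW k = 2 * (2 * (k:ℝ) + 3) ^ 2 / (((k:ℝ) + 1) * ((k:ℝ) + 2)) := by
    unfold πGW; field_simp; ring
  rw [hd1, h9, one_sub_pi]
  unfold fGW
  push_cast
  rw [hf1, hf0]
  field_simp
  ring

lemma iterate_pi (u m : ℕ) : gθ^[m] (πGW u) = πGW (u + m) := by
  induction m with
  | zero => simp
  | succ m ih =>
      rw [Function.iterate_succ_apply', ih, gθ_pi, ← Nat.add_assoc]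

lemma key (u m : ℕ) : HasDerivAt (gθ^[m]) (fGW (u + m) / fGW u) (πGW u) := by
  induction m with
  | zero =>
      simp only [Function.iterate_zero, Nat.add_zero,
        div_self (fGW_pos u).ne']
      exact hasDerivAt_id _
  | succ m ih =>
      have hg : HasDerivAt gθ (fGW (u + m + 1) / fGW (u + m)) (gθ^[m] (πGW u)) := by
        rw [iterate_pi]; exact gθ_deriv (u + m)
      have h := hg.comp (πGW u) ih
      rw [← Function.iterate_succ' gθ m] at h
      refine h.congr_deriv ?_
      symm
      rw [← Nat.add_assoc]
      field_simp [(fGW_pos (u + m)).ne', (fGW_pos u).ne']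

theorem iterate_deriv_at_pi (u w : ℕ) (hu : 1 ≤ u) (huw : u < w) :
    HasDerivAt (gθ^[w - u]) (fGW w / fGW u) (πGW u) := by
  have h := key u (w - u)
  rwa [Nat.add_sub_cancel' huw.le] at h
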